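/- Let f₁ : ℝ^{d_x} → ℝ be μ_x-strongly convex (μ_x > 0) and differentiable, f₂ : ℝ^{d_x} → ℝ convex, g₁ : ℝ^{d_y} → ℝ convex and differentiable, g₂ : ℝ^{d_y} → ℝ convex, and B a real d_y×d_x matrix. Define ℒ(x, y) = f₁(x) + f₂(x) + ⟨y, Bx⟩ − g₁(y) − g₂(y), and assume φ(y) := g₁(y) + (f₁+f₂)^*(−Bᵀy) is μ_φ-strongly convex (μ_φ > 0), where (f₁+f₂)^*(z) = sup_x (⟨z, x⟩ − f₁(x) − f₂(x)). Let (x*, y*) be a saddle point of ℒ, i.e., ℒ(x*, y) ≤ ℒ(x*, y*) ≤ ℒ(x, y*) for all x, y. For any (x, y), set d_x(x,y) = inf{ ‖∇f₁(x) + Bᵀy + u‖ : u a subgradient of f₂ at x } and d_y(x,y) = inf{ ‖∇g₁(y) + w − Bx‖ : w a subgradient of g₂ at y }. Then for all (x, y): ‖y − y*‖ ≤ (1/μ_φ) d_y(x,y) + (σmax(B)/(μ_x μ_φ)) d_x(x,y), and ‖x − x*‖ ≤ (σmax(B)/(μ_x μ_φ)) d_y(x,y) + (1/μ_x + σmax(B)²/(μ_x²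 μ_φ)) d_x(x,y). -/

import Mathlib

/-!
Let `x̂` minimise `f + ⟪Bᵀy, ·⟫`, where `f = f₁ + f₂`, and let `σ = σmax(B)`. Everything is
measured through the strong monotonicity `μ ‖a - b‖ ≤ ‖u - v‖` of the subdifferential of a
`μ`-strongly convex function. As `-Bᵀy ∈ ∂f(x̂)`, `-Bᵀy* ∈ ∂f(x*)` and `∇f₁(x) + u ∈ ∂f(x)`,
we get `μₓ ‖x - x̂‖ ≤ ‖∇f₁(x) + Bᵀy + u‖` and `μₓ ‖x̂ - x*‖ ≤ σ ‖y - y*‖`. By Fenchel duality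
`x̂ ∈ ∂f*(-Bᵀy)`, so `∇g₁(y) + w - Bx̂` is a subgradient at `y` of the dual function
`φ + g₂ = g₁ + g₂ + f*(-Bᵀ·)`, which is `μ_φ`-strongly convex and has `0 ∈ ∂(φ + g₂)(y*)`;
hence `μ_φ ‖y - y*‖ ≤ ‖∇g₁(y) + w - Bx‖ + σ ‖x - x̂‖`. Combining the three inequalities and
taking the infimum over the subgradients `u`, `w` gives both bounds.
-/

open scoped RealInnerProductSpace
open Matrix

/-- The largest singular value of a matrix, i.e. the operator norm of the induced linear
map between Euclidean spaces. -/
noncomputable def sigmaMax {p d : ℕ} (A : Matrix (Fin p) (Fin d) ℝ) : ℝ :=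
  ‖LinearMap.toContinuousLinearMap (Matrix.toEuclideanLin A)‖

/-- `dist(0, ∂_x ℒ(x,y))`: the infimum of `‖∇f₁(x) + Bᵀy + u‖` over subgradients `u`
of `f₂` at `x`. -/
noncomputable def dxGap {dx dy : ℕ} (f₁ f₂ : EuclideanSpace ℝ (Fin dx) → ℝ)
    (B : Matrix (Fin dy) (Fin dx) ℝ)
    (x : EuclideanSpace ℝ (Fin dx)) (y : EuclideanSpace ℝ (Fin dy)) : ℝ :=
  sInf {c : ℝ | ∃ u : EuclideanSpace ℝ (Fin dx),
    (∀ z, f₂ x + ⟪u, z - x⟫ ≤ f₂ z) ∧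
    c = ‖gradient f₁ x + Matrix.toEuclideanLin Bᵀ y + u‖}

/-- `dist(0, ∂_y ℒ(x,y))`: the infimum of `‖∇g₁(y) + w − Bx‖` over subgradients `w`
of `g₂` at `y`. -/
noncomputable def dyGap {dx dy : ℕ} (g₁ g₂ : EuclideanSpace ℝ (Fin dy) → ℝ)
    (B : Matrix (Fin dy) (Fin dx) ℝ)
    (x : EuclideanSpace ℝ (Fin dx)) (y : EuclideanSpace ℝ (Fin dy)) : ℝ :=
  sInf {c : ℝ | ∃ w : EuclideanSpace ℝ (Fin dy),
    (∀ z, g₂ y + ⟪w, z - y⟫ ≤ g₂ z) ∧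
    c = ‖gradient g₁ y + w - Matrix.toEuclideanLin B x‖}

open Set Filter Topology
open scoped InnerProduct

theorem tendsto_quadratic_atTop {a b c : ℝ} (ha : 0 < a) :
    Tendsto (fun r : ℝ => c - b * r + a * r ^ 2) atTop atTop := by
  have h : Tendsto (fun r : ℝ => r * (a * r - b)) atTop atTop :=
    tendsto_id.atTop_mul_atTop₀ <|
      tendsto_atTop_add_const_right _ _ (tendsto_id.const_mul_atTop ha)
  exact (tendsto_atTop_add_const_left _ c h).congr fun r => by ring

theorem le_mul_csInf_add {S : Set ℝ} (hS : S.Nonempty) {a b α : ℝ} (hα : 0 ≤ α)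
    (h : ∀ s ∈ S, a ≤ α * s + b) : a ≤ α * sInf S + b := by
  rcases hα.eq_or_lt with rfl | hα
  · obtain ⟨s, hs⟩ := hS
    simpa using h s hs
  · have : (a - b) / α ≤ sInf S :=
      le_csInf hS fun s hs => (div_le_iff₀' hα).2 (by linarith [h s hs])
    rw [div_le_iff₀' hα] at this
    linarith

theorem le_mul_csInf_add_mul_csInf {S T : Set ℝ} (hS : S.Nonempty) (hT : T.Nonempty)
    {a α β : ℝ} (hα : 0 ≤ α) (hβ : 0 ≤ β) (h : ∀ s ∈ S, ∀ t ∈ T, a ≤ α * s + β * t) :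
    a ≤ α * sInf S + β * sInf T := by
  rw [add_comm]
  refine le_mul_csInf_add hT hβ fun t ht => ?_
  rw [add_comm]
  exact le_mul_csInf_add hS hα fun s hs => h s hs t ht

section Subgradient

variable {E : Type*} [NormedAddCommGroup E] [InnerProductSpace ℝ E]

def HasSubgradientAt (f : E → ℝ) (u x : E) : Prop :=
  ∀ z, f x + ⟪u, z - x⟫ ≤ f z

-- `⨆` of a family unbounded above is `0`; the conjugate is only evaluated where the supremum
-- is attained.
noncomputable def fenchelConjugate (f : E → ℝ) (u : E) : ℝ :=
  ⨆ x, ⟪u, x⟫ - f x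

variable {f g : E → ℝ} {u v x : E} {m : ℝ}

theorem hasSubgradientAt_iff_forall_inner_sub_le :
    HasSubgradientAt f u x ↔ ∀ z, ⟪u, z⟫ - f z ≤ ⟪u, x⟫ - f x := by
  refine forall_congr' fun z => ?_
  rw [inner_sub_right]
  constructor <;> intro h <;> linarith

theorem HasSubgradientAt.add (hf : HasSubgradientAt f u x) (hg : HasSubgradientAt g v x) :
    HasSubgradientAt (f + g) (u + v) x := fun z => by
  simp only [Pi.add_apply, inner_add_left]
  linarith [hf z, hg z]

theorem HasSubgradientAt.fenchelConjugate_eq (hu : HasSubgradientAt f u x) :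
    fenchelConjugate f u = ⟪u, x⟫ - f x := by
  rw [hasSubgradientAt_iff_forall_inner_sub_le] at hu
  exact le_antisymm (ciSup_le hu) (le_ciSup ⟨_, forall_mem_range.2 hu⟩ x)

theorem HasSubgradientAt.fenchelConjugate (hu : HasSubgradientAt f u x)
    (hsurj : ∀ v, ∃ z, HasSubgradientAt f v z) :
    HasSubgradientAt (fenchelConjugate f) x u := fun v => by
  obtain ⟨z, hz⟩ := hsurj v
  rw [hu.fenchelConjugate_eq, hz.fenchelConjugate_eq, inner_sub_right, real_inner_comm u,
    real_inner_comm v]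
  linarith [hasSubgradientAt_iff_forall_inner_sub_le.1 hz x]

theorem HasSubgradientAt.comp_adjoint {F : Type*} [NormedAddCommGroup F]
    [InnerProductSpace ℝ F] [CompleteSpace E] [CompleteSpace F] {T : F →L[ℝ] E} {y : F}
    (hu : HasSubgradientAt f u (T y)) :
    HasSubgradientAt (f ∘ T) ((T†) u) y := fun z => by
  simpa [ContinuousLinearMap.adjoint_inner_left] using hu (T z)

theorem ConvexOn.hasSubgradientAt_gradient [CompleteSpace E] (hf : ConvexOn ℝ univ f)
    (hd : DifferentiableAt ℝ f x) : HasSubgradientAt f (gradient f x) x := fun z => by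
  have hline : HasDerivAt (f ∘ AffineMap.lineMap (k := ℝ) x z) ⟪gradient f x, z - x⟫ 0 := by
    have hd' : HasFDerivAt f (InnerProductSpace.toDual ℝ E (gradient f x))
        (AffineMap.lineMap x z (0 : ℝ)) := by
      simpa using hd.hasGradientAt.hasFDerivAt
    simpa only [InnerProductSpace.toDual_apply_apply] using
      hd'.comp_hasDerivAt (0 : ℝ) AffineMap.hasDerivAt_lineMap
  have := (hf.comp_affineMap (AffineMap.lineMap x z)).le_slope_of_hasDerivAt
    (mem_univ 0) (mem_univ 1) one_pos hline
  simp only [slope_def_field, Function.comp_apply, AffineMap.lineMap_apply_zero,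
    AffineMap.lineMap_apply_one, sub_zero, div_one] at this
  linarith

theorem StrongConvexOn.add_convexOn {s : Set E} (hf : StrongConvexOn s m f)
    (hg : ConvexOn ℝ s g) : StrongConvexOn s m (f + g) := by
  have h := hf.add (uniformConvexOn_zero.2 hg)
  rwa [add_zero] at h

theorem StrongConvexOn.add_inner_le_of_hasSubgradientAt (hf : StrongConvexOn univ m f)
    (hu : HasSubgradientAt f u x) (z : E) :
    f x + ⟪u, z - x⟫ + m / 2 * ‖z - x‖ ^ 2 ≤ f z := by
  -- Divide the strong convexity inequality on `[x, z]` by `t` and let `t → 0⁺`.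
  have key : ∀ t ∈ Ioo (0 : ℝ) 1,
      ⟪u, z - x⟫ + (1 - t) * (m / 2 * ‖z - x‖ ^ 2) ≤ f z - f x := by
    rintro t ⟨ht0, ht1⟩
    have hconv :=
      hf.2 (mem_univ x) (mem_univ z) (sub_nonneg.2 ht1.le) ht0.le (sub_add_cancel 1 t)
    have hsub := hu ((1 - t) • x + t • z)
    rw [show (1 - t) • x + t • z - x = t • (z - x) by module, real_inner_smul_right] at hsub
    rw [smul_eq_mul, smul_eq_mul, norm_sub_rev] at hconv
    beta_reduce at hconv
    refine le_of_mul_le_mul_left ?_ ht0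
    linarith
  have hcont : Continuous fun t : ℝ => ⟪u, z - x⟫ + (1 - t) * (m / 2 * ‖z - x‖ ^ 2) := by
    fun_prop
  have hlim : Tendsto (fun t : ℝ => ⟪u, z - x⟫ + (1 - t) * (m / 2 * ‖z - x‖ ^ 2)) (𝓝[>] 0)
      (𝓝 (⟪u, z - x⟫ + m / 2 * ‖z - x‖ ^ 2)) := by
    simpa using hcont.continuousAt.tendsto.mono_left (nhdsWithin_le_nhds (a := (0 : ℝ)))
  have := le_of_tendsto hlim (eventually_of_mem (Ioo_mem_nhdsGT one_pos) key)
  linarith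

theorem StrongConvexOn.mul_norm_sub_le_norm_sub (hf : StrongConvexOn univ m f) {y : E}
    (hu : HasSubgradientAt f u x) (hv : HasSubgradientAt f v y) : m * ‖x - y‖ ≤ ‖u - v‖ := by
  have h1 := hf.add_inner_le_of_hasSubgradientAt hu y
  have h2 := hf.add_inner_le_of_hasSubgradientAt hv x
  have hmono : m * ‖x - y‖ * ‖x - y‖ ≤ ‖u - v‖ * ‖x - y‖ := by
    have : ⟪u - v, x - y⟫ = -⟪u, y - x⟫ - ⟪v, x - y⟫ := by
      rw [inner_sub_left, ← neg_sub x y, inner_neg_right]; ring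
    rw [norm_sub_rev y x] at h1
    nlinarith [real_inner_le_norm (u - v) (x - y)]
  rcases (norm_nonneg (x - y)).eq_or_lt with h | h
  · rw [← h, mul_zero]; exact norm_nonneg _
  · exact le_of_mul_le_mul_right hmono h

theorem ConvexOn.exists_hasSubgradientAt [FiniteDimensional ℝ E] (hf : ConvexOn ℝ univ f)
    (x : E) : ∃ u, HasSubgradientAt f u x := by
  -- A functional `ℓ` separating `(x, f x)` from the open strict epigraph supports the graph of
  -- `f` at `x`; its vertical component `c` is negative, so the hyperplane is non-vertical.
  have hopen : IsOpen {p : E × ℝ | p.1 ∈ univ ∧ f p.1 < p.2} := by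
    simp only [mem_univ, true_and]
    exact isOpen_lt (hf.locallyLipschitz.continuous.comp continuous_fst) continuous_snd
  obtain ⟨ℓ, hℓ⟩ := geometric_hahn_banach_open_point hf.convex_strict_epigraph hopen
    (x := (x, f x)) (by simp)
  set c := ℓ (0, 1)
  have hℓ_apply : ∀ z t, ℓ (z, t) = ℓ (z, 0) + t * c := fun z t => by
    rw [show ((z, t) : E × ℝ) = (z, 0) + t • (0, 1) by ext <;> simp, map_add, map_smul,
      smul_eq_mul]
  have hsep : ∀ z t, f z < t → ℓ (z, 0) + t * c < ℓ (x, 0) + f x * c := fun z t h => by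
    rw [← hℓ_apply, ← hℓ_apply]
    exact hℓ (z, t) ⟨mem_univ z, h⟩
  have hc : c < 0 := by linarith [hsep x (f x + 1) (lt_add_one _)]
  have hsupp : ∀ z, ℓ (z, 0) + f z * c ≤ ℓ (x, 0) + f x * c := fun z => by
    have hcont : Continuous fun t : ℝ => ℓ (z, 0) + t * c := by fun_prop
    exact le_of_tendsto
      (hcont.continuousAt.tendsto.mono_left (nhdsWithin_le_nhds (s := Ioi (f z))))
      (eventually_of_mem self_mem_nhdsWithin fun t ht => (hsep z t ht).le)
  refine ⟨(-c)⁻¹ • (InnerProductSpace.toDual ℝ E).symm (ℓ.comp (.inl ℝ E ℝ)), fun z => ?_⟩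
  rw [real_inner_smul_left, InnerProductSpace.toDual_symm_apply, ContinuousLinearMap.comp_apply,
    ContinuousLinearMap.inl_apply, show ((z - x, 0) : E × ℝ) = (z, 0) - (x, 0) by simp, map_sub]
  have : (-c)⁻¹ * (ℓ (z, 0) - ℓ (x, 0)) ≤ f z - f x := by
    rw [inv_mul_le_iff₀ (neg_pos.2 hc)]
    linarith [hsupp z]
  linarith

theorem StrongConvexOn.exists_forall_le [FiniteDimensional ℝ E] (hm : 0 < m)
    (hf : StrongConvexOn univ m f) : ∃ x, ∀ z, f x ≤ f z := by
  have hconv : ConvexOn ℝ univ f := hf.convexOn fun r => by positivity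
  obtain ⟨v, hv⟩ := hconv.exists_hasSubgradientAt 0
  have hlower : ∀ z, f 0 - ‖v‖ * ‖z‖ + m / 2 * ‖z‖ ^ 2 ≤ f z := fun z => by
    have h := hf.add_inner_le_of_hasSubgradientAt hv z
    rw [sub_zero] at h
    linarith [neg_le_of_abs_le (abs_real_inner_le_norm v z)]
  exact hconv.locallyLipschitz.continuous.exists_forall_le <| tendsto_atTop_mono hlower <|
    (tendsto_quadratic_atTop (half_pos hm)).comp tendsto_norm_cocompact_atTop

theorem StrongConvexOn.forall_exists_hasSubgradientAt [FiniteDimensional ℝ E] (hm : 0 < m)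
    (hf : StrongConvexOn univ m f) (u : E) : ∃ x, HasSubgradientAt f u x := by
  have htilt : StrongConvexOn univ m (f + fun z => ⟪-u, z⟫) :=
    hf.add_convexOn ((innerSL ℝ (-u)).toLinearMap.convexOn convex_univ)
  obtain ⟨x, hx⟩ := htilt.exists_forall_le hm
  refine ⟨x, hasSubgradientAt_iff_forall_inner_sub_le.2 fun z => ?_⟩
  have := hx z
  simp only [Pi.add_apply, inner_neg_left] at this
  linarith

end Subgradient

section SaddlePoint

variable {E F : Type*} [NormedAddCommGroup E] [InnerProductSpace ℝ E] [FiniteDimensional ℝ E]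
  [NormedAddCommGroup F] [InnerProductSpace ℝ F] [FiniteDimensional ℝ F]

theorem hasSubgradientAt_fenchelConjugate_comp_neg_adjoint {f : E → ℝ} {μ : ℝ} (hμ : 0 < μ)
    (hf : StrongConvexOn univ μ f) (A : E →L[ℝ] F) {x : E} {y : F}
    (hx : HasSubgradientAt f (-((A†) y)) x) :
    HasSubgradientAt (fenchelConjugate f ∘ ⇑(-A†)) (-A x) y := by
  have h :=
    (hx.fenchelConjugate (hf.forall_exists_hasSubgradientAt hμ)).comp_adjoint (T := -A†)
  rwa [map_neg, ContinuousLinearMap.adjoint_adjoint] at h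

theorem hasSubgradientAt_of_saddlePoint {f : E → ℝ} {g : F → ℝ} (A : E →L[ℝ] F)
    {L : E → F → ℝ} (hL : ∀ x y, L x y = f x + ⟪y, A x⟫ - g y) {xs : E} {ys : F}
    (hsaddle₁ : ∀ y, L xs y ≤ L xs ys) (hsaddle₂ : ∀ x, L xs ys ≤ L x ys) :
    HasSubgradientAt f (-(A†) ys) xs ∧ HasSubgradientAt g (A xs) ys := by
  simp only [hasSubgradientAt_iff_forall_inner_sub_le, inner_neg_left,
    ContinuousLinearMap.adjoint_inner_left]
  constructor
  · intro z
    linarith [hsaddle₂ z, hL xs ys, hL z ys]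
  · intro z
    linarith [hsaddle₁ z, hL xs ys, hL xs z, real_inner_comm (A xs) z,
      real_inner_comm (A xs) ys]

theorem norm_sub_saddlePoint_le {f : E → ℝ} {g : F → ℝ} {μx μφ : ℝ} (hμx : 0 < μx)
    (hμφ : 0 < μφ) (hf : StrongConvexOn univ μx f) (A : E →L[ℝ] F)
    (hD : StrongConvexOn univ μφ (g + fenchelConjugate f ∘ ⇑(-A†)))
    {L : E → F → ℝ} (hL : ∀ x y, L x y = f x + ⟪y, A x⟫ - g y) {xs : E} {ys : F}
    (hsaddle₁ : ∀ y, L xs y ≤ L xs ys) (hsaddle₂ : ∀ x, L xs ys ≤ L x ys)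
    {x p : E} {y q : F} (hp : HasSubgradientAt f p x) (hq : HasSubgradientAt g q y) :
    ‖y - ys‖ ≤ 1 / μφ * ‖q - A x‖ + ‖A‖ / (μx * μφ) * ‖p + (A†) y‖ ∧
      ‖x - xs‖ ≤ ‖A‖ / (μx * μφ) * ‖q - A x‖
        + (1 / μx + ‖A‖ ^ 2 / (μx ^ 2 * μφ)) * ‖p + (A†) y‖ := by
  obtain ⟨hxs, hys⟩ := hasSubgradientAt_of_saddlePoint A hL hsaddle₁ hsaddle₂
  obtain ⟨xh, hxh⟩ := hf.forall_exists_hasSubgradientAt hμx (-((A†) y))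
  have hDy : HasSubgradientAt (g + fenchelConjugate f ∘ ⇑(-A†)) (q - A xh) y := by
    simpa [sub_eq_add_neg] using
      hq.add (hasSubgradientAt_fenchelConjugate_comp_neg_adjoint hμx hf A hxh)
  have hDys : HasSubgradientAt (g + fenchelConjugate f ∘ ⇑(-A†)) 0 ys := by
    simpa using hys.add (hasSubgradientAt_fenchelConjugate_comp_neg_adjoint hμx hf A hxs)
  have h1 : μx * ‖x - xh‖ ≤ ‖p + (A†) y‖ := by
    simpa using hf.mul_norm_sub_le_norm_sub hp hxh
  have h2 : μx * ‖xh - xs‖ ≤ ‖A‖ * ‖y - ys‖ := by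
    calc μx * ‖xh - xs‖ ≤ ‖(A†) (ys - y)‖ := by
          simpa [map_sub, sub_eq_add_neg, add_comm] using hf.mul_norm_sub_le_norm_sub hxh hxs
      _ ≤ ‖A‖ * ‖y - ys‖ := by
          simpa [norm_sub_rev] using (A†).le_opNorm (ys - y)
  have h3 : μφ * ‖y - ys‖ ≤ ‖q - A x‖ + ‖A‖ * ‖x - xh‖ := by
    calc μφ * ‖y - ys‖ ≤ ‖q - A xh‖ := by simpa using hD.mul_norm_sub_le_norm_sub hDy hDys
      _ = ‖(q - A x) + A (x - xh)‖ := by rw [map_sub]; abel_nf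
      _ ≤ ‖q - A x‖ + ‖A‖ * ‖x - xh‖ :=
          (norm_add_le _ _).trans (by gcongr; exact A.le_opNorm _)
  have hxh : ‖x - xh‖ ≤ ‖p + (A†) y‖ / μx := (le_div_iff₀' hμx).2 h1
  have hy : ‖y - ys‖ ≤ 1 / μφ * ‖q - A x‖ + ‖A‖ / (μx * μφ) * ‖p + (A†) y‖ := by
    calc ‖y - ys‖ ≤ (‖q - A x‖ + ‖A‖ * (‖p + (A†) y‖ / μx)) / μφ :=
          (le_div_iff₀' hμφ).2 (h3.trans (by gcongr))
      _ = _ := by field_simp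
  refine ⟨hy, ?_⟩
  calc ‖x - xs‖ ≤ ‖x - xh‖ + ‖xh - xs‖ := norm_sub_le_norm_sub_add_norm_sub _ _ _
    _ ≤ ‖p + (A†) y‖ / μx
          + ‖A‖ / μx * (1 / μφ * ‖q - A x‖ + ‖A‖ / (μx * μφ) * ‖p + (A†) y‖) := by
        gcongr
        rw [div_mul_eq_mul_div, le_div_iff₀' hμx]
        exact h2.trans (by gcongr)
    _ = _ := by field_simp; ring

end SaddlePoint

theorem Matrix.toEuclideanLin_adjoint {m n : ℕ} (B : Matrix (Fin m) (Fin n) ℝ) :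
    (LinearMap.toContinuousLinearMap (toEuclideanLin B))† =
      LinearMap.toContinuousLinearMap (toEuclideanLin Bᵀ) := by
  rw [← LinearMap.adjoint_toContinuousLinearMap, ← toEuclideanLin_conjTranspose_eq_adjoint,
    conjTranspose_eq_transpose_of_trivial]
/-- Error bound for the saddle-point problem
`ℒ(x,y) = f₁(x) + f₂(x) + ⟪y, Bx⟫ − g₁(y) − g₂(y)`: if `f₁` is `μ_x`-strongly convex
and differentiable, `f₂, g₂` convex, `g₁` convex differentiable, and the dual function
`φ(y) = g₁(y) + (f₁+f₂)^*(−Bᵀy)` is `μ_φ`-strongly convex, then for a saddle point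
`(x*, y*)` and any `(x, y)`,
`‖y − y*‖ ≤ (1/μ_φ) d_y + (σmax(B)/(μ_x μ_φ)) d_x` and
`‖x − x*‖ ≤ (σmax(B)/(μ_x μ_φ)) d_y + (1/μ_x + σmax(B)²/(μ_x² μ_φ)) d_x`. -/
theorem stmt8 {dx dy : ℕ} (μx μφ : ℝ) (hμx : 0 < μx) (hμφ : 0 < μφ)
    (f₁ f₂ : EuclideanSpace ℝ (Fin dx) → ℝ)
    (hf₁sc : ConvexOn ℝ Set.univ (fun x => f₁ x - μx / 2 * ‖x‖ ^ 2))
    (hf₁d : Differentiable ℝ f₁)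
    (hf₂ : ConvexOn ℝ Set.univ f₂)
    (g₁ g₂ : EuclideanSpace ℝ (Fin dy) → ℝ)
    (hg₁ : ConvexOn ℝ Set.univ g₁) (hg₁d : Differentiable ℝ g₁)
    (hg₂ : ConvexOn ℝ Set.univ g₂)
    (B : Matrix (Fin dy) (Fin dx) ℝ)
    (L : EuclideanSpace ℝ (Fin dx) → EuclideanSpace ℝ (Fin dy) → ℝ)
    (hL : ∀ x y, L x y = f₁ x + f₂ x + ⟪y, Matrix.toEuclideanLin B x⟫ - g₁ y - g₂ y)
    (conj : EuclideanSpace ℝ (Fin dx) → ℝ)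
    (hconj : ∀ z, conj z = ⨆ x : EuclideanSpace ℝ (Fin dx), (⟪z, x⟫ - f₁ x - f₂ x))
    (φ : EuclideanSpace ℝ (Fin dy) → ℝ)
    (hφ : ∀ y, φ y = g₁ y + conj (-(Matrix.toEuclideanLin Bᵀ y)))
    (hφsc : ConvexOn ℝ Set.univ (fun y => φ y - μφ / 2 * ‖y‖ ^ 2))
    (xstar : EuclideanSpace ℝ (Fin dx)) (ystar : EuclideanSpace ℝ (Fin dy))
    (hsaddle₁ : ∀ y, L xstar y ≤ L xstar ystar)
    (hsaddle₂ : ∀ x, L xstar ystar ≤ L x ystar) :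
    ∀ (x : EuclideanSpace ℝ (Fin dx)) (y : EuclideanSpace ℝ (Fin dy)),
      ‖y - ystar‖ ≤ (1 / μφ) * dyGap g₁ g₂ B x y
          + sigmaMax B / (μx * μφ) * dxGap f₁ f₂ B x y ∧
      ‖x - xstar‖ ≤ sigmaMax B / (μx * μφ) * dyGap g₁ g₂ B x y
          + (1 / μx + sigmaMax B ^ 2 / (μx ^ 2 * μφ)) * dxGap f₁ f₂ B x y := by
  intro x y
  unfold sigmaMax dxGap dyGap
  set A := LinearMap.toContinuousLinearMap (toEuclideanLin B)
  have hA : ∀ v, A v = toEuclideanLin B v := fun _ => rfl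
  have hAadj : ∀ v, (A†) v = toEuclideanLin Bᵀ v := fun v => by
    rw [Matrix.toEuclideanLin_adjoint]; rfl
  have hLA : ∀ x y, L x y = (f₁ + f₂) x + ⟪y, A x⟫ - (g₁ + g₂) y := fun x y => by
    simp only [hL, hA, Pi.add_apply]
    ring
  have hf₁ : StrongConvexOn univ μx f₁ := strongConvexOn_iff_convex.2 hf₁sc
  have hf : StrongConvexOn univ μx (f₁ + f₂) := hf₁.add_convexOn hf₂
  have hDeq : φ + g₂ = (g₁ + g₂) + fenchelConjugate (f₁ + f₂) ∘ ⇑(-A†) := by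
    funext v
    simp only [Pi.add_apply, hφ, hconj, inner_neg_left, sub_sub, FunLike.coe_neg,
      Function.comp_apply, fenchelConjugate, Pi.neg_apply, hAadj]
    ring
  have hD : StrongConvexOn univ μφ ((g₁ + g₂) + fenchelConjugate (f₁ + f₂) ∘ ⇑(-A†)) :=
    hDeq ▸ (strongConvexOn_iff_convex.2 hφsc).add_convexOn hg₂
  have bound := fun u (hu : HasSubgradientAt f₂ u x) w (hw : HasSubgradientAt g₂ w y) =>
    norm_sub_saddlePoint_le hμx hμφ hf A hD hLA hsaddle₁ hsaddle₂
      ((hf₁.convexOn fun r => by positivity).hasSubgradientAt_gradient (hf₁d x) |>.add hu)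
      ((hg₁.hasSubgradientAt_gradient (hg₁d y)).add hw)
  obtain ⟨u₀, hu₀⟩ := hf₂.exists_hasSubgradientAt x
  obtain ⟨w₀, hw₀⟩ := hg₂.exists_hasSubgradientAt y
  constructor
  all_goals
    refine le_mul_csInf_add_mul_csInf ?_ ?_ (by positivity) (by positivity) ?_
    · exact ⟨_, w₀, hw₀, rfl⟩
    · exact ⟨_, u₀, hu₀, rfl⟩
    rintro _ ⟨w, hw, rfl⟩ _ ⟨u, hu, rfl⟩
  · simpa [hA, hAadj, add_right_comm] using (bound u hu w hw).1
  · simpa [hA, hAadj, add_right_comm] using (bound u hu w hw).2
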